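/- The quotient graph is invariant under a merge step: if G is a finite simple graph, Γ a duplication forest for G with trees T₁,…,T_k, and u, v are leaves of the same tree T_i forming a cherry, then Π(R_v^u(G)) = Π(G), where Π(G) is the graph on {1,…,k} with i ~ j (i ≠ j) iff some leaf of T_i is adjacent in G to some leaf of T_j. -/

import Mathlib

open scoped Classical

universe u

variable {V : Type u}

/-- The merge (backward) operator `R_v^u(G)`: contract duplicate `v` into anchor `u`.
Vertex `v` becomes isolated (representing its removal from the vertex set). -/
def mergeG (G : SimpleGraph V) (u v : V) : SimpleGraph V where
  Adj x y := x ≠ y ∧ x ≠ v ∧ y ≠ v ∧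
    (G.Adj x y ∨ (x = u ∧ G.Adj v y) ∨ (y = u ∧ G.Adj v x))
  symm := by
    constructor
    rintro x y ⟨h1, h2, h3, h4⟩
    refine ⟨h1.symm, h3, h2, ?_⟩
    rcases h4 with h | ⟨a, b⟩ | ⟨a, b⟩
    · exact Or.inl h.symm
    · exact Or.inr (Or.inr ⟨a, b⟩)
    · exact Or.inr (Or.inl ⟨a, b⟩)
  loopless := by constructor; rintro x ⟨h, _⟩; exact h rfl

/-- δ(v): 1 if the duplicate `v` is adjacent to its anchor `u`. -/
noncomputable def deltaI (G : SimpleGraph V) (u v : V) : ℕ :=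
  if G.Adj u v then 1 else 0

/-- e(v): number of common neighbours of anchor `u` and duplicate `v`. -/
noncomputable def extI [Fintype V] (G : SimpleGraph V) (u v : V) : ℕ :=
  (G.neighborFinset u ∩ G.neighborFinset v).card

/-- ℓ(v): number of vertices (other than `u`, `v`) adjacent to exactly one of `u`, `v`. -/
noncomputable def lossI [Fintype V] (G : SimpleGraph V) (u v : V) : ℕ :=
  (((G.neighborFinset u ∪ G.neighborFinset v) \
      (G.neighborFinset u ∩ G.neighborFinset v)) \ {u, v}).card

/-- Apply the merge operators backward along a list of (anchor, duplicate) pairs. -/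
noncomputable def graphAfter (G : SimpleGraph V) (steps : List (V × V)) : SimpleGraph V :=
  steps.foldl (fun g p => mergeG g p.1 p.2) G

noncomputable def deltaNum : SimpleGraph V → List (V × V) → ℕ
  | _, [] => 0
  | G, s :: rest => deltaI G s.1 s.2 + deltaNum (mergeG G s.1 s.2) rest

noncomputable def extNum [Fintype V] : SimpleGraph V → List (V × V) → ℕ
  | _, [] => 0
  | G, s :: rest => extI G s.1 s.2 + extNum (mergeG G s.1 s.2) rest

noncomputable def lossNum [Fintype V] : SimpleGraph V → List (V × V) → ℕ
  | _, [] => 0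
  | G, s :: rest => lossI G s.1 s.2 + lossNum (mergeG G s.1 s.2) rest

/-- The likelihood of a (backward) history: product of one-step DMC transition
probabilities `p_c^{δ_i} p^{e_i} q^{ℓ_i}` with `q = (1-p)/2`. -/
noncomputable def likelihood [Fintype V] (pc p : ℝ) : SimpleGraph V → List (V × V) → ℝ
  | _, [] => 1
  | G, s :: rest =>
      pc ^ deltaI G s.1 s.2 * p ^ extI G s.1 s.2 * ((1 - p) / 2) ^ lossI G s.1 s.2 *
        likelihood pc p (mergeG G s.1 s.2) rest

/-- Rooted binary trees. -/
inductive BTree (V : Type u) : Type u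
  | leaf : V → BTree V
  | node : BTree V → BTree V → BTree V

def BTree.leaves : BTree V → List V
  | .leaf v => [v]
  | .node l r => l.leaves ++ r.leaves

/-- A duplication forest: a list of rooted binary trees. -/
abbrev Forest (V : Type u) := List (BTree V)

def Forest.leaves (Γ : Forest V) : List V := Γ.flatMap BTree.leaves

/-- Replace the cherry `{u, v}` of a tree by the single leaf `u`. -/
inductive ReplaceCherry : BTree V → V → V → BTree V → Prop
  | base_left (u v : V) : ReplaceCherry (.node (.leaf u) (.leaf v)) u v (.leaf u)
  | base_right (u v : V) : ReplaceCherry (.node (.leaf v) (.leaf u)) u v (.leaf u)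
  | left {l l' r : BTree V} {u v : V} :
      ReplaceCherry l u v l' → ReplaceCherry (.node l r) u v (.node l' r)
  | right {l r r' : BTree V} {u v : V} :
      ReplaceCherry r u v r' → ReplaceCherry (.node l r) u v (.node l r')

/-- One backward step on a duplication forest: replace the cherry `{u,v}` in one tree. -/
inductive ForestStep : Forest V → V → V → Forest V → Prop
  | head {t t' : BTree V} {ts : Forest V} {u v : V} :
      ReplaceCherry t u v t' → ForestStep (t :: ts) u v (t' :: ts)
  | tail {t : BTree V} {ts ts' : Forest V} {u v : V} :
      ForestStep ts u v ts' → ForestStep (t :: ts) u v (t :: ts')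

/-- `FUnfold Γ steps Γ₀`: the (anchor, duplicate) list `steps`, processed backward in time,
is compatible with the duplication forest `Γ` and reduces it to `Γ₀`. -/
inductive FUnfold : Forest V → List (V × V) → Forest V → Prop
  | nil (Γ : Forest V) : FUnfold Γ [] Γ
  | cons {Γ Γ' Γ₀ : Forest V} {u v : V} {steps : List (V × V)} :
      ForestStep Γ u v Γ' → FUnfold Γ' steps Γ₀ → FUnfold Γ ((u, v) :: steps) Γ₀

/-- A forest consisting only of isolated leaves (duplication forest of a seed graph). -/
def IsSeed (Γ : Forest V) : Prop := ∀ t ∈ Γ, ∃ v, t = BTree.leaf v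

/-- Π(G): the quotient graph on the trees of the duplication forest `Γ`. -/
def quotientGraph (G : SimpleGraph V) (Γ : Forest V) : SimpleGraph (Fin Γ.length) where
  Adj i j := i ≠ j ∧ ∃ x ∈ (Γ.get i).leaves, ∃ y ∈ (Γ.get j).leaves, G.Adj x y
  symm := by
    constructor
    rintro i j ⟨h, x, hx, y, hy, hxy⟩
    exact ⟨h.symm, y, hy, x, hx, hxy.symm⟩
  loopless := by constructor; rintro i ⟨h, _⟩; exact h rfl

/-! Merging `v` into `u` only hands the edges of `v` over to `u`. Since `u` and `v` are leaves of
the same tree, and (the leaves of the forest being distinct) `v` is a leaf of no other tree,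
an edge of `G` between two different trees remains such an edge after the merge, with the
endpoint `v` replaced by `u`, and the merge creates no edge between different trees that `G`
did not already have. -/

section ReplaceCherry

variable {t t' : BTree V} {u v : V}

theorem ReplaceCherry.anchor_mem_leaves (h : ReplaceCherry t u v t') : u ∈ t.leaves := by
  induction h <;> simp [BTree.leaves, *]

theorem ReplaceCherry.dup_mem_leaves (h : ReplaceCherry t u v t') : v ∈ t.leaves := by
  induction h <;> simp [BTree.leaves, *]

theorem ReplaceCherry.ne (h : ReplaceCherry t u v t') (hnd : t.leaves.Nodup) : u ≠ v := by
  induction h with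
  | base_left => simpa [BTree.leaves] using hnd
  | base_right => simpa [BTree.leaves, eq_comm] using hnd
  | left _ ih => exact ih (List.nodup_append.1 hnd).1
  | right _ ih => exact ih (List.nodup_append.1 hnd).2.1

theorem ReplaceCherry.mem_leaves_iff (h : ReplaceCherry t u v t') (hnd : t.leaves.Nodup) (x : V) :
    x ∈ t'.leaves ↔ x ∈ t.leaves ∧ x ≠ v := by
  induction h with
  | base_left u v | base_right u v =>
    have huv : u ≠ v := by simpa [BTree.leaves, eq_comm] using hnd
    simp only [BTree.leaves, List.cons_append, List.nil_append, List.mem_cons,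
      List.not_mem_nil, or_false]
    grind
  | @left l l' r u v h ih =>
    obtain ⟨hl, -, hdisj⟩ := List.nodup_append.1 hnd
    have hvr : v ∉ r.leaves := fun hv => hdisj _ h.dup_mem_leaves _ hv rfl
    simp only [BTree.leaves, List.mem_append, ih hl]
    grind
  | @right l r r' u v h ih =>
    obtain ⟨-, hr, hdisj⟩ := List.nodup_append.1 hnd
    have hvl : v ∉ l.leaves := fun hv => hdisj _ hv _ h.dup_mem_leaves rfl
    simp only [BTree.leaves, List.mem_append, ih hr]
    grind

end ReplaceCherry

theorem Forest.nodup_leaves_getElem {Γ : Forest V} (hnd : Γ.leaves.Nodup) {i : ℕ}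
    (hi : i < Γ.length) : Γ[i].leaves.Nodup :=
  (List.nodup_flatMap.1 hnd).1 _ (List.getElem_mem hi)

theorem Forest.eq_of_mem_leaves_getElem {Γ : Forest V} (hnd : Γ.leaves.Nodup) {i j : ℕ}
    (hi : i < Γ.length) (hj : j < Γ.length) {x : V} (hxi : x ∈ Γ[i].leaves)
    (hxj : x ∈ Γ[j].leaves) : i = j := by
  have hdisj := List.pairwise_iff_getElem.1 (List.nodup_flatMap.1 hnd).2
  by_contra hne
  rcases Nat.lt_or_gt_of_ne hne with hlt | hlt
  · exact hdisj i j hi hj hlt hxi hxj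
  · exact hdisj j i hj hi hlt hxj hxi

section ForestStep

variable {Γ Γ' : Forest V} {u v : V}

theorem ForestStep.exists_eq_set (h : ForestStep Γ u v Γ') :
    ∃ (k : ℕ) (hk : k < Γ.length) (t' : BTree V), ReplaceCherry Γ[k] u v t' ∧ Γ' = Γ.set k t' := by
  induction h with
  | head h => exact ⟨0, by simp, _, h, rfl⟩
  | tail _ ih =>
    obtain ⟨k, hk, t', h, rfl⟩ := ih
    exact ⟨k + 1, by simpa, t', h, rfl⟩

theorem ForestStep.ne (h : ForestStep Γ u v Γ') (hnd : Γ.leaves.Nodup) : u ≠ v := by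
  obtain ⟨k, hk, t', hrc, -⟩ := h.exists_eq_set
  exact hrc.ne (Forest.nodup_leaves_getElem hnd hk)

theorem ForestStep.mem_leaves_getElem_iff (h : ForestStep Γ u v Γ') (hnd : Γ.leaves.Nodup)
    {i : ℕ} (hi' : i < Γ'.length) (hi : i < Γ.length) (x : V) :
    x ∈ Γ'[i].leaves ↔ x ∈ Γ[i].leaves ∧ x ≠ v := by
  obtain ⟨k, hk, t', hrc, rfl⟩ := h.exists_eq_set
  rw [List.getElem_set]
  split_ifs with hki
  · subst hki
    exact hrc.mem_leaves_iff (Forest.nodup_leaves_getElem hnd hk) x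
  · have hvi : v ∉ Γ[i].leaves := fun hv =>
      hki (Forest.eq_of_mem_leaves_getElem hnd hk hi hrc.dup_mem_leaves hv)
    exact ⟨fun hx => ⟨hx, by rintro rfl; exact hvi hx⟩, And.left⟩

theorem ForestStep.anchor_mem_leaves_getElem_iff (h : ForestStep Γ u v Γ')
    (hnd : Γ.leaves.Nodup) {i : ℕ} (hi : i < Γ.length) :
    u ∈ Γ[i].leaves ↔ v ∈ Γ[i].leaves := by
  obtain ⟨k, hk, t', hrc, -⟩ := h.exists_eq_set
  constructor <;> intro hmem
  · obtain rfl := Forest.eq_of_mem_leaves_getElem hnd hi hk hmem hrc.anchor_mem_leaves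
    exact hrc.dup_mem_leaves
  · obtain rfl := Forest.eq_of_mem_leaves_getElem hnd hi hk hmem hrc.dup_mem_leaves
    exact hrc.anchor_mem_leaves

end ForestStep

section BlockGraph

variable {ι : Type*}

def blockGraph (G : SimpleGraph V) (mem : ι → V → Prop) : SimpleGraph ι where
  Adj i j := i ≠ j ∧ ∃ x, mem i x ∧ ∃ y, mem j y ∧ G.Adj x y
  symm := ⟨fun _ _ ⟨hij, x, hx, y, hy, hxy⟩ => ⟨hij.symm, y, hy, x, hx, hxy.symm⟩⟩
  loopless := ⟨fun _ h => h.1 rfl⟩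

theorem quotientGraph_eq_blockGraph (G : SimpleGraph V) (Γ : Forest V) :
    quotientGraph G Γ = blockGraph G (fun i x => x ∈ Γ[i].leaves) :=
  rfl

theorem blockGraph_comap {κ : Type*} (G : SimpleGraph V) (mem : ι → V → Prop) {f : κ → ι}
    (hf : f.Injective) : (blockGraph G mem).comap f = blockGraph G (fun k => mem (f k)) := by
  ext i j
  simp [blockGraph, hf.ne_iff]

theorem blockGraph_mergeG (G : SimpleGraph V) {mem mem' : ι → V → Prop} {u v : V} (huv : u ≠ v)
    (hmem' : ∀ k x, mem' k x ↔ mem k x ∧ x ≠ v) (hu : ∀ k, mem k u ↔ mem k v)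
    (hv : ∀ k l, mem k v → mem l v → k = l) :
    blockGraph (mergeG G u v) mem' = blockGraph G mem := by
  ext i j
  simp only [blockGraph, mergeG, hmem']
  constructor
  · rintro ⟨hij, x, ⟨hx, -⟩, y, ⟨hy, -⟩, -, -, -, hxy | ⟨rfl, hvy⟩ | ⟨rfl, hvx⟩⟩
    · exact ⟨hij, x, hx, y, hy, hxy⟩
    · exact ⟨hij, v, (hu i).1 hx, y, hy, hvy⟩
    · exact ⟨hij, x, hx, v, (hu j).1 hy, hvx.symm⟩
  · rintro ⟨hij, x, hx, y, hy, hxy⟩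
    have outside : ∀ {k l z}, k ≠ l → mem k v → mem l z → z ≠ u ∧ z ≠ v := by
      refine fun hkl hk hz => ⟨?_, ?_⟩ <;> rintro rfl
      exacts [hkl (hv _ _ hk ((hu _).1 hz)), hkl (hv _ _ hk hz)]
    refine ⟨hij, ?_⟩
    by_cases hxv : x = v
    · subst hxv
      obtain ⟨hyu, hyv⟩ := outside hij hx hy
      exact ⟨u, ⟨(hu i).2 hx, huv⟩, y, ⟨hy, hyv⟩, hyu.symm, huv, hyv, Or.inr (Or.inl ⟨rfl, hxy⟩)⟩
    by_cases hyv : y = v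
    · subst hyv
      obtain ⟨hxu, hxv⟩ := outside (Ne.symm hij) hy hx
      exact ⟨x, ⟨hx, hxv⟩, u, ⟨(hu j).2 hy, huv⟩, hxu, hxv, huv, Or.inr (Or.inr ⟨rfl, hxy.symm⟩)⟩
    exact ⟨x, ⟨hx, hxv⟩, y, ⟨hy, hyv⟩, hxy.ne, hxv, hyv, Or.inl hxy⟩

end BlockGraph

theorem stmt5_general (G : SimpleGraph V) (Γ Γ' : Forest V) (u v : V)
    (hnd : (Forest.leaves Γ).Nodup)
    (hstep : ForestStep Γ u v Γ') (hlen : Γ'.length = Γ.length) :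
    quotientGraph (mergeG G u v) Γ' = (quotientGraph G Γ).comap (Fin.cast hlen) := by
  rw [quotientGraph_eq_blockGraph, quotientGraph_eq_blockGraph,
    blockGraph_comap _ _ (Fin.cast_injective hlen)]
  refine blockGraph_mergeG G (hstep.ne hnd) (fun k x => ?_) (fun k => ?_) (fun k l hk hl => ?_)
  · exact hstep.mem_leaves_getElem_iff hnd _ _ x
  · exact hstep.anchor_mem_leaves_getElem_iff hnd _
  · exact Fin.ext (Forest.eq_of_mem_leaves_getElem hnd _ _ hk hl)

/-- the quotient graph is invariant under a merge step: if `u, v` are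
leaves forming a cherry of one tree of `Γ` and `Γ'` is the forest obtained by replacing
this cherry with the leaf `u`, then `Π(R_v^u(G)) = Π(G)` (up to the canonical
identification of the index sets, which have equal length). -/
theorem stmt5 [Fintype V] (G : SimpleGraph V) (Γ Γ' : Forest V) (u v : V)
    (hnd : (Forest.leaves Γ).Nodup) (hall : ∀ x : V, x ∈ Forest.leaves Γ)
    (hstep : ForestStep Γ u v Γ') (hlen : Γ'.length = Γ.length) :
    quotientGraph (mergeG G u v) Γ' = (quotientGraph G Γ).comap (Fin.cast hlen) :=
  stmt5_general G Γ Γ' u v hnd hstep hlen
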